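/- Let G = ([n], E) be a DAG and let i ≠ j be vertices and K ⊆ [n] ∖ {i,j} a set such that K does not d-separate i from j in G. Suppose (a,b) ∈ E and every path from i to j that is d-connecting given K traverses the edge a → b (i.e., contains a and b as consecutive vertices joined by this edge). Then the variable λ_{ab} divides the polynomial det S_{{i}∪K,{j}∪K} in R, and consequently M_{G ∖ a→b} ⊆ M_{G, i⊥⊥j|K}, where G ∖ a→b denotes the DAG obtained from G by deleting the edge (a,b). -/

import Mathlib

open Matrix MvPolynomial

namespace CI

/-- A directed acyclic graph on vertex set `Fin n`. -/
structure DAG (n : ℕ) where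
  E : Finset (Fin n × Fin n)
  acyclic : ∀ v : Fin n, ¬ Relation.TransGen (fun a b => (a, b) ∈ E) v v

variable {n : ℕ}

/-- `d` is a descendant of `v` (every vertex is a descendant of itself). -/
def DAG.desc (G : DAG n) (v d : Fin n) : Prop :=
  Relation.ReflTransGen (fun a b => (a, b) ∈ G.E) v d

/-- An (undirected) path in a DAG from `i` to `j`, encoded by its length and a
vertex function which is constant past the end of the path. -/
structure GPath (G : DAG n) (i j : Fin n) where
  len : ℕ
  v : ℕ → Fin n
  start_eq : v 0 = i
  end_eq : v len = j
  inj : ∀ s t : ℕ, s ≤ len → t ≤ len → v s = v t → s = t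
  adj : ∀ t : ℕ, t < len → (v t, v (t + 1)) ∈ G.E ∨ (v (t + 1), v t) ∈ G.E
  stable : ∀ t : ℕ, len ≤ t → v t = v len

namespace GPath

variable {G : DAG n} {i j : Fin n}

/-- The interior vertex at position `t` is a collider on the path. -/
def IsCollider (p : GPath G i j) (t : ℕ) : Prop :=
  0 < t ∧ t < p.len ∧ (p.v (t - 1), p.v t) ∈ G.E ∧ (p.v (t + 1), p.v t) ∈ G.E

/-- `x` lies on the path `p`. -/
def onPath (p : GPath G i j) (x : Fin n) : Prop := ∃ t ≤ p.len, p.v t = x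

/-- The path `p` is d-connecting given `K`. -/
def DConn (p : GPath G i j) (K : Finset (Fin n)) : Prop :=
  (∀ t : ℕ, 0 < t → t < p.len → ¬ p.IsCollider t → p.v t ∉ K) ∧
  (∀ t : ℕ, p.IsCollider t → ∃ d ∈ K, G.desc (p.v t) d)

end GPath

/-- `K` d-separates `i` and `j` in `G`. -/
def DAG.dSep (G : DAG n) (i j : Fin n) (K : Finset (Fin n)) : Prop :=
  ∀ p : GPath G i j, ¬ p.DConn K

/-- `C` d-separates the sets `A` and `B` in `G`. -/
def DAG.dSepSets (G : DAG n) (A B C : Finset (Fin n)) : Prop :=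
  ∀ a ∈ A, ∀ b ∈ B, ∀ p : GPath G a b, ¬ p.DConn C

/-- The parameterization `φ_G(Λ, Ω) = (I - Λ)^{-T} Ω (I - Λ)^{-1}`. -/
noncomputable def phi (Λ : Matrix (Fin n) (Fin n) ℝ) (ω : Fin n → ℝ) :
    Matrix (Fin n) (Fin n) ℝ :=
  ((1 - Λ)⁻¹)ᵀ * Matrix.diagonal ω * (1 - Λ)⁻¹

/-- `(Λ, ω)` is a valid parameter for the DAG `G`. -/
def IsParam (G : DAG n) (Λ : Matrix (Fin n) (Fin n) ℝ) (ω : Fin n → ℝ) : Prop :=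
  (∀ a b : Fin n, (a, b) ∉ G.E → Λ a b = 0) ∧ ∀ a : Fin n, 0 < ω a

/-- The Gaussian DAG model `M_G`: the image of `φ_G` over the parameter space. -/
def gaussianModel (G : DAG n) : Set (Matrix (Fin n) (Fin n) ℝ) :=
  { M | ∃ Λ ω, IsParam G Λ ω ∧ M = phi Λ ω }

/-- The determinant of the submatrix of `M` with rows `A` and columns `B`
(in the increasing order of indices); junk value `0` if `A` and `B` have
different cardinality. -/
noncomputable def subDet {α : Type} [CommRing α] (M : Matrix (Fin n) (Fin n) α)
    (A B : Finset (Fin n)) : α :=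
  if h : B.card = A.card then
    Matrix.det (Matrix.of fun p q : Fin A.card =>
      M ((A.orderIsoOfFin rfl p).1) ((B.orderIsoOfFin h q).1))
  else 0

/-- The model `M_{G, i ⊥⊥ j | K}`. -/
noncomputable def modelCI (G : DAG n) (i j : Fin n) (K : Finset (Fin n)) :
    Set (Matrix (Fin n) (Fin n) ℝ) :=
  { M | M ∈ gaussianModel G ∧ subDet M (insert i K) (insert j K) = 0 }

/-- The polynomial ring `R` in the variables `λ_{ab}` ((a,b) ∈ E) and `ω_a`. -/
abbrev PolyR (n : ℕ) := MvPolynomial (Fin n × Fin n ⊕ Fin n) ℝ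

/-- The matrix `L` of indeterminates `λ_{ab}` for edges `(a,b) ∈ E`. -/
noncomputable def Lmat (G : DAG n) : Matrix (Fin n) (Fin n) (PolyR n) :=
  Matrix.of fun a b => if (a, b) ∈ G.E then X (Sum.inl (a, b)) else 0

/-- The matrix of polynomials `S = (I - L)^{-T} W (I - L)^{-1}`. -/
noncomputable def Smat (G : DAG n) : Matrix (Fin n) (Fin n) (PolyR n) :=
  ((1 - Lmat G)⁻¹)ᵀ * Matrix.diagonal (fun a => X (Sum.inr a)) * (1 - Lmat G)⁻¹

/-- Evaluation of a polynomial in `R` at a parameter point `(Λ, ω)`. -/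
noncomputable def evalParam (Λ : Matrix (Fin n) (Fin n) ℝ) (ω : Fin n → ℝ) :
    PolyR n →+* ℝ :=
  MvPolynomial.eval (Sum.elim (fun e : Fin n × Fin n => Λ e.1 e.2) ω)

/-- `p` is a monomial: a nonzero scalar multiple of a single power product. -/
def IsMonomial (p : PolyR n) : Prop := p.support.card = 1

/-- A directed path in a DAG from `s` to `t`, encoded as for `GPath`. -/
structure DiPath (G : DAG n) (s t : Fin n) where
  len : ℕ
  v : ℕ → Fin n
  start_eq : v 0 = s
  end_eq : v len = t
  inj : ∀ a b : ℕ, a ≤ len → b ≤ len → v a = v b → a = b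
  adj : ∀ a : ℕ, a < len → (v a, v (a + 1)) ∈ G.E
  stable : ∀ a : ℕ, len ≤ a → v a = v len

namespace DiPath

variable {G : DAG n} {s t : Fin n}

/-- `x` lies on the directed path `p`. -/
def onPath (p : DiPath G s t) (x : Fin n) : Prop := ∃ a ≤ p.len, p.v a = x

/-- The directed path `p` traverses the edge `e`. -/
def hasEdge (p : DiPath G s t) (e : Fin n × Fin n) : Prop :=
  ∃ a < p.len, p.v a = e.1 ∧ p.v (a + 1) = e.2

end DiPath

/-- A trek: a pair of directed paths with a common top vertex. -/
structure Trek (G : DAG n) where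
  top : Fin n
  left : Fin n
  right : Fin n
  L : DiPath G top left
  R : DiPath G top right

/-- The trek `trk` traverses the edge `e` (on its left or right part). -/
def Trek.hasEdge {G : DAG n} (trk : Trek G) (e : Fin n × Fin n) : Prop :=
  trk.L.hasEdge e ∨ trk.R.hasEdge e

/-- A trek system from `A` to `B`: a set of treks whose left endpoints exhaust `A`
and whose right endpoints exhaust `B`. -/
def IsTrekSystem (G : DAG n) (A B : Finset (Fin n)) (T : Set (Trek G)) : Prop :=
  Set.BijOn (fun trk => trk.left) T ↑A ∧ Set.BijOn (fun trk => trk.right) T ↑B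

/-- The trek system `T` has no sided intersection. -/
def NoSidedIntersection {G : DAG n} (T : Set (Trek G)) : Prop :=
  (∀ t₁ ∈ T, ∀ t₂ ∈ T, t₁ ≠ t₂ → ∀ x : Fin n, t₁.L.onPath x → ¬ t₂.L.onPath x) ∧
  (∀ t₁ ∈ T, ∀ t₂ ∈ T, t₁ ≠ t₂ → ∀ x : Fin n, t₁.R.onPath x → ¬ t₂.R.onPath x)

/-- The product of the edge variables traversed by a directed path. -/
noncomputable def diMon {G : DAG n} {s t : Fin n} (p : DiPath G s t) : PolyR n :=
  ∏ a ∈ Finset.range p.len, X (Sum.inl (p.v a, p.v (a + 1)))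

/-- The trek monomial `m_T = ω_s ∏ λ_{kl}`. -/
noncomputable def trekMon {G : DAG n} (trk : Trek G) : PolyR n :=
  X (Sum.inr trk.top) * diMon trk.L * diMon trk.R

/-- The trek system monomial: product of the trek monomials of its treks. -/
noncomputable def trekSysMon {G : DAG n} (T : Set (Trek G)) : PolyR n :=
  ∏ᶠ trk ∈ T, trekMon trk

/-- Partial covariance `σ_{x,a·B}`. -/
noncomputable def pCov (M : Matrix (Fin n) (Fin n) ℝ) (x a : Fin n)
    (B : Finset (Fin n)) : ℝ :=
  M x a - ∑ p : {b : Fin n // b ∈ B}, ∑ q : {b : Fin n // b ∈ B},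
      M x p.1 *
        (M.submatrix (fun b : {b : Fin n // b ∈ B} => b.1)
          (fun b : {b : Fin n // b ∈ B} => b.1))⁻¹ p q *
      M q.1 a

/-- Partial correlation `ρ_{x,a·B}`. -/
noncomputable def pCor (M : Matrix (Fin n) (Fin n) ℝ) (x a : Fin n)
    (B : Finset (Fin n)) : ℝ :=
  pCov M x a B / Real.sqrt (pCov M x x B * pCov M a a B)

/-- The DAG obtained by deleting the edge `(a, b)`. -/
def DAG.deleteEdge (G : DAG n) (a b : Fin n) : DAG n where
  E := G.E.erase (a, b)
  acyclic := fun v hv =>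
    G.acyclic v ((Relation.TransGen.mono (fun _ _ hxy => Finset.mem_of_mem_erase hxy) :
      Relation.TransGen (fun x y => (x, y) ∈ G.E.erase (a, b)) ≤
        Relation.TransGen (fun x y => (x, y) ∈ G.E)) v v hv)

/-- The Gaussian CI statement `A ⊥⊥_Σ B | C`: all `(|C|+1) × (|C|+1)` minors of
the submatrix with rows `A ∪ C` and columns `B ∪ C` vanish. -/
noncomputable def ciHolds (M : Matrix (Fin n) (Fin n) ℝ)
    (A B C : Finset (Fin n)) : Prop :=
  ∀ A' B' : Finset (Fin n), A' ⊆ A ∪ C → B' ⊆ B ∪ C →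
    A'.card = C.card + 1 → B'.card = C.card + 1 → subDet M A' B' = 0

/-- A set of CI statements over `[4]` is gaussoid-closed. -/
def GaussoidClosed (𝒢 : Fin 4 → Fin 4 → Finset (Fin 4) → Prop) : Prop :=
  (∀ a b C, 𝒢 a b C → 𝒢 b a C) ∧
  ∀ i j k : Fin 4, ∀ L : Finset (Fin 4),
    i ≠ j → i ≠ k → j ≠ k → i ∉ L → j ∉ L → k ∉ L →
      ((𝒢 i j L → 𝒢 i k (insert j L) → 𝒢 i k L ∧ 𝒢 i j (insert k L)) ∧
       (𝒢 i j (insert k L) → 𝒢 i k (insert j L) → 𝒢 i j L ∧ 𝒢 i k L) ∧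
       (𝒢 i j L → 𝒢 i k L → 𝒢 i j (insert k L) ∧ 𝒢 i k (insert j L)) ∧
       (𝒢 i j L → 𝒢 i j (insert k L) → 𝒢 i k L ∨ 𝒢 j k L))

end CI
namespace CI

variable {n : ℕ}

open Relation

lemma DAG.not_self_loop (G : DAG n) {x : Fin n} (h : (x, x) ∈ G.E) : False :=
  G.acyclic x (Relation.TransGen.single h)

lemma DAG.no_two_cycle (G : DAG n) {x y : Fin n} (h1 : (x, y) ∈ G.E)
    (h2 : (y, x) ∈ G.E) : False :=
  G.acyclic x (Relation.TransGen.head h1 (Relation.TransGen.single h2))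

/-- Lift a path along an edge-subset inclusion. -/
def GPath.lift {G₁ G₂ : DAG n} (h : G₁.E ⊆ G₂.E) {i j : Fin n} (p : GPath G₁ i j) :
    GPath G₂ i j :=
  ⟨p.len, p.v, p.start_eq, p.end_eq, p.inj,
    fun t ht => (p.adj t ht).imp (fun he => h he) (fun he => h he), p.stable⟩

lemma GPath.lift_collider_iff {G₁ G₂ : DAG n} (h : G₁.E ⊆ G₂.E) {i j : Fin n}
    (p : GPath G₁ i j) (t : ℕ) : (p.lift h).IsCollider t ↔ p.IsCollider t := by
  constructor
  · rintro ⟨ht0, htl, h1, h2⟩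
    simp only [GPath.lift] at ht0 htl h1 h2
    refine ⟨ht0, htl, ?_, ?_⟩
    · rcases p.adj (t - 1) (by omega) with h' | h'
      · rwa [show t - 1 + 1 = t by omega] at h'
      · rw [show t - 1 + 1 = t by omega] at h'
        exact absurd (h h') (fun hc => (G₂.no_two_cycle h1 hc))
    · rcases p.adj t (by omega) with h' | h'
      · exact absurd (h h') (fun hc => (G₂.no_two_cycle h2 hc))
      · exact h'
  · rintro ⟨ht0, htl, h1, h2⟩
    exact ⟨ht0, htl, h h1, h h2⟩

lemma DAG.desc_mono {G₁ G₂ : DAG n} (h : G₁.E ⊆ G₂.E) {v d : Fin n}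
    (hd : G₁.desc v d) : G₂.desc v d :=
  by refine Relation.ReflTransGen.mono ?_ v d hd; intro _ _ he; exact h he

lemma GPath.lift_dconn {G₁ G₂ : DAG n} (h : G₁.E ⊆ G₂.E) {i j : Fin n}
    (p : GPath G₁ i j) {K : Finset (Fin n)} (hc : p.DConn K) :
    (p.lift h).DConn K := by
  obtain ⟨hnc, hcol⟩ := hc
  constructor
  · intro t ht0 htl hncol
    exact hnc t ht0 htl (fun hcl => hncol ((p.lift_collider_iff h t).2 hcl))
  · intro t hcl
    obtain ⟨d, hd, hdesc⟩ := hcol t ((p.lift_collider_iff h t).1 hcl)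
    exact ⟨d, hd, DAG.desc_mono h hdesc⟩

lemma DAG.dSep_mono {G₁ G₂ : DAG n} (h : G₁.E ⊆ G₂.E) {i j : Fin n}
    {K : Finset (Fin n)} (hs : G₂.dSep i j K) : G₁.dSep i j K :=
  fun p hc => hs (p.lift h) (p.lift_dconn h hc)

/-- Step 1: if every d-connecting path uses the edge `a → b`, then deleting
that edge yields d-separation. -/
lemma dSep_deleteEdge_of_all {G : DAG n} {i j : Fin n} {K : Finset (Fin n)}
    {a b : Fin n} (hE : (a, b) ∈ G.E)
    (hall : ∀ p : GPath G i j, p.DConn K → ∃ t : ℕ, t < p.len ∧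
        ((p.v t = a ∧ p.v (t + 1) = b) ∨ (p.v t = b ∧ p.v (t + 1) = a))) :
    (G.deleteEdge a b).dSep i j K := by
  intro p hc
  have hsub : (G.deleteEdge a b).E ⊆ G.E := fun e he => Finset.mem_of_mem_erase he
  obtain ⟨t, htl, hcase⟩ := hall (p.lift hsub) (p.lift_dconn hsub hc)
  have hadj := p.adj t htl
  rcases hcase with ⟨h1, h2⟩ | ⟨h1, h2⟩
  · simp only [GPath.lift] at h1 h2
    rcases hadj with h' | h'
    · rw [h1, h2] at h'
      exact (Finset.notMem_erase (a, b) G.E) h'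
    · rw [h1, h2] at h'
      exact G.no_two_cycle hE (hsub h')
  · simp only [GPath.lift] at h1 h2
    rcases hadj with h' | h'
    · rw [h1, h2] at h'
      exact G.no_two_cycle hE (hsub h')
    · rw [h1, h2] at h'
      exact (Finset.notMem_erase (a, b) G.E) h'

end CI

namespace CI

open Matrix Relation

variable {n : ℕ} {R S : Type*} [CommRing R] [CommRing S]

/-- A matrix is supported on the edges of `G`. -/
def Supp (G : DAG n) (M : Matrix (Fin n) (Fin n) R) : Prop :=
  ∀ u v : Fin n, (u, v) ∉ G.E → M u v = 0

lemma Supp.map {G : DAG n} {M : Matrix (Fin n) (Fin n) R} (hM : Supp G M)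
    (f : R →+* S) : Supp G (M.map f) := by
  intro u v huv
  simp [Matrix.map_apply, hM u v huv]

lemma Supp.pow_entry_reach {G : DAG n} {M : Matrix (Fin n) (Fin n) R}
    (hM : Supp G M) :
    ∀ (m : ℕ) (u v : Fin n), (M ^ m) u v ≠ 0 →
      ∃ f : ℕ → Fin n, f 0 = u ∧ f m = v ∧ ∀ t < m, (f t, f (t + 1)) ∈ G.E := by
  intro m
  induction m with
  | zero =>
    intro u v h
    rw [pow_zero] at h
    have : u = v := by
      by_contra hne
      exact h (Matrix.one_apply_ne hne)
    exact ⟨fun _ => u, rfl, this ▸ rfl, fun t ht => absurd ht (Nat.not_lt_zero t)⟩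
  | succ m ih =>
    intro u v h
    rw [pow_succ, Matrix.mul_apply] at h
    obtain ⟨c, _, hc⟩ := Finset.exists_ne_zero_of_sum_ne_zero h
    have h1 : (M ^ m) u c ≠ 0 := left_ne_zero_of_mul hc
    have h2 : M c v ≠ 0 := right_ne_zero_of_mul hc
    have hcv : (c, v) ∈ G.E := by
      by_contra hne
      exact h2 (hM c v hne)
    obtain ⟨f, hf0, hfm, hadj⟩ := ih u c h1
    refine ⟨fun t => if t ≤ m then f t else v, by simpa using hf0, by simp, ?_⟩
    intro t ht
    rcases Nat.lt_or_ge t m with h' | h'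
    · simpa [Nat.le_of_lt h', Nat.succ_le_of_lt h'] using hadj t h'
    · have : t = m := by omega
      subst this
      simpa [hfm] using hcv

lemma chain_transGen (G : DAG n) (f : ℕ → Fin n) {m : ℕ}
    (hadj : ∀ t < m, (f t, f (t + 1)) ∈ G.E) :
    ∀ s t, s < t → t ≤ m → Relation.TransGen (fun a b => (a, b) ∈ G.E) (f s) (f t) := by
  intro s t
  induction t with
  | zero => omega
  | succ t iht =>
    intro hst htm
    rcases Nat.lt_or_ge s t with h' | h'
    · exact (iht h' (by omega)).tail (hadj t (by omega))
    · have : s = t := by omega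
      subst this
      exact Relation.TransGen.single (hadj s (by omega))

lemma Supp.pow_card_eq_zero {G : DAG n} {M : Matrix (Fin n) (Fin n) R}
    (hM : Supp G M) : M ^ n = 0 := by
  ext u v
  simp only [Matrix.zero_apply]
  by_contra h
  obtain ⟨f, _, _, hadj⟩ := hM.pow_entry_reach n u v h
  obtain ⟨s, hs, t, ht, hst, hfe⟩ :=
    Finset.exists_ne_map_eq_of_card_lt_of_maps_to
      (s := Finset.range (n + 1)) (t := Finset.univ)
      (by simp) (fun x _ => Finset.mem_univ (f x))
  simp only [Finset.mem_range] at hs ht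
  rcases Nat.lt_or_ge s t with h' | h'
  · exact G.acyclic (f s) (hfe ▸ chain_transGen G f hadj s t h' (by omega))
  · have h'' : t < s := by omega
    exact G.acyclic (f t) (hfe ▸ chain_transGen G f hadj t s h'' (by omega))

lemma Supp.diag_eq_zero {G : DAG n} {M : Matrix (Fin n) (Fin n) R}
    (hM : Supp G M) (u : Fin n) : M u u = 0 :=
  hM u u (fun h => G.not_self_loop h)

lemma Supp.det_one_sub {G : DAG n} {M : Matrix (Fin n) (Fin n) R}
    (hM : Supp G M) : (1 - M).det = 1 := by
  rw [Matrix.det_apply]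
  rw [Finset.sum_eq_single_of_mem 1 (Finset.mem_univ 1)]
  · simp only [Equiv.Perm.sign_one, one_smul, Equiv.Perm.one_apply]
    rw [Finset.prod_congr rfl (fun i _ => ?_), Finset.prod_const_one]
    simp [Matrix.sub_apply, Matrix.one_apply, hM.diag_eq_zero i]
  · intro σ _ hσ
    have hzero : ∃ i ∈ Finset.univ, (1 - M) (σ i) i = 0 := by
      by_contra hne
      push_neg at hne
      have hedge : ∀ x : Fin n, σ x ≠ x → (σ x, x) ∈ G.E := by
        intro x hx
        by_contra hE
        refine hne x (Finset.mem_univ x) ?_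
        simp [Matrix.sub_apply, Matrix.one_apply_ne hx, hM (σ x) x hE]
      obtain ⟨v, hv⟩ : ∃ v, σ v ≠ v := by
        by_contra hall
        push_neg at hall
        exact hσ (Equiv.ext hall)
      have hmoved : ∀ k : ℕ, σ ((σ ^ k) v) ≠ (σ ^ k) v := by
        intro k
        induction k with
        | zero => simpa using hv
        | succ k ihk =>
          rw [pow_succ', Equiv.Perm.mul_apply]
          intro hcontra
          exact ihk (σ.injective hcontra)
      have hcyc : ∀ m : ℕ, Relation.TransGen (fun a b => (a, b) ∈ G.E) ((σ ^ (m + 1)) v) v := by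
        intro m
        induction m with
        | zero =>
          have := hedge v hv
          rw [pow_one]
          exact Relation.TransGen.single this
        | succ m ihm =>
          refine Relation.TransGen.head ?_ ihm
          have : (σ ^ (m + 1 + 1)) v = σ ((σ ^ (m + 1)) v) := by
            rw [pow_succ', Equiv.Perm.mul_apply]
          rw [this]
          exact hedge _ (hmoved (m + 1))
      have horder : (σ ^ orderOf σ) v = v := by
        rw [pow_orderOf_eq_one]; rfl
      have hpos : 0 < orderOf σ := orderOf_pos σ
      obtain ⟨m, hm⟩ : ∃ m, orderOf σ = m + 1 := ⟨orderOf σ - 1, by omega⟩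
      have hvv : Relation.TransGen (fun a b => (a, b) ∈ G.E) v v := by
        have h' := hcyc m
        rw [← hm, horder] at h'
        exact h'
      exact G.acyclic v hvv
    obtain ⟨i, _, hi⟩ := hzero
    have hz : ∏ i : Fin n, (1 - M) (σ i) i = 0 := Finset.prod_eq_zero (Finset.mem_univ i) hi
    rw [hz, smul_zero]

lemma Supp.isUnit_det_one_sub {G : DAG n} {M : Matrix (Fin n) (Fin n) R}
    (hM : Supp G M) : IsUnit (1 - M).det := by
  rw [hM.det_one_sub]; exact isUnit_one

lemma Supp.inv_one_sub_eq_adjugate {G : DAG n} {M : Matrix (Fin n) (Fin n) R}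
    (hM : Supp G M) : (1 - M)⁻¹ = (1 - M).adjugate := by
  rw [Matrix.inv_def, hM.det_one_sub, Ring.inverse_one, one_smul]

lemma Supp.one_sub_mul_inv {G : DAG n} {M : Matrix (Fin n) (Fin n) R}
    (hM : Supp G M) : (1 - M) * (1 - M)⁻¹ = 1 :=
  Matrix.mul_nonsing_inv _ hM.isUnit_det_one_sub

lemma Supp.inv_mul_one_sub {G : DAG n} {M : Matrix (Fin n) (Fin n) R}
    (hM : Supp G M) : (1 - M)⁻¹ * (1 - M) = 1 :=
  Matrix.nonsing_inv_mul _ hM.isUnit_det_one_sub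

lemma Supp.inv_one_sub_eq_geom {G : DAG n} {M : Matrix (Fin n) (Fin n) R}
    (hM : Supp G M) : (1 - M)⁻¹ = ∑ m ∈ Finset.range n, M ^ m := by
  refine Matrix.inv_eq_left_inv ?_
  have hg := geom_sum_mul M n
  rw [hM.pow_card_eq_zero] at hg
  have h2 : (∑ m ∈ Finset.range n, M ^ m) * (1 - M) =
      -((∑ m ∈ Finset.range n, M ^ m) * (M - 1)) := by
    rw [← mul_neg, neg_sub]
  rw [h2, hg]
  simp

lemma Supp.map_inv_one_sub {G : DAG n} {M : Matrix (Fin n) (Fin n) R}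
    (hM : Supp G M) (f : R →+* S) :
    (1 - M.map f)⁻¹ = ((1 - M)⁻¹).map f := by
  have h1 : (1 : Matrix (Fin n) (Fin n) S) - M.map f = (1 - M).map f := by
    ext u v
    by_cases h : u = v <;>
      simp [Matrix.map_apply, Matrix.sub_apply, Matrix.one_apply, h]
  have h2 := RingHom.map_adjugate f (1 - M)
  simp only [RingHom.mapMatrix_apply] at h2
  rw [(hM.map f).inv_one_sub_eq_adjugate, hM.inv_one_sub_eq_adjugate, h2, h1]

end CI
namespace CI

open Matrix MvPolynomial

variable {n : ℕ} {R : Type*} [CommRing R]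

lemma supp_Lmat (G : DAG n) : Supp G (Lmat G) := by
  intro u v h
  simp [Lmat, h]

lemma Smat_map (G : DAG n) (f : PolyR n →+* R) :
    (Smat G).map f = ((1 - (Lmat G).map f)⁻¹)ᵀ *
      Matrix.diagonal (fun a => f (X (Sum.inr a))) * (1 - (Lmat G).map f)⁻¹ := by
  have hmul : ∀ A B : Matrix (Fin n) (Fin n) (PolyR n), (A * B).map f = A.map f * B.map f := by
    intro A B
    have := map_mul f.mapMatrix A B
    simpa only [RingHom.mapMatrix_apply] using this
  have hinv := (supp_Lmat G).map_inv_one_sub f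
  unfold Smat
  rw [hmul, hmul, Matrix.transpose_map, ← hinv, Matrix.diagonal_map (map_zero f)]

lemma subDet_map {R' : Type} [CommRing R'] (f : PolyR n →+* R') (M : Matrix (Fin n) (Fin n) (PolyR n))
    (A B : Finset (Fin n)) : f (subDet M A B) = subDet (M.map f) A B := by
  unfold subDet
  by_cases h : B.card = A.card
  · rw [dif_pos h, dif_pos h, RingHom.map_det]
    congr 1
  · rw [dif_neg h, dif_neg h, map_zero]

lemma subDet_congr {R' : Type} [CommRing R'] {M N : Matrix (Fin n) (Fin n) R'} {A B : Finset (Fin n)}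
    (h : ∀ x ∈ A, ∀ y ∈ B, M x y = N x y) : subDet M A B = subDet N A B := by
  unfold subDet
  by_cases hc : B.card = A.card
  · rw [dif_pos hc, dif_pos hc]
    congr 1
    ext p q
    exact h _ (A.orderIsoOfFin rfl p).2 _ (B.orderIsoOfFin hc q).2
  · rw [dif_neg hc, dif_neg hc]

/-- The substitution killing the variable `v`. -/
noncomputable def psiSub (v : Fin n × Fin n ⊕ Fin n) : PolyR n →ₐ[ℝ] PolyR n :=
  aeval (fun w => if w = v then 0 else X w)

lemma X_dvd_sub_psi (v : Fin n × Fin n ⊕ Fin n) (p : PolyR n) :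
    X v ∣ (p - psiSub v p) := by
  induction p using MvPolynomial.induction_on with
  | C r => simp [psiSub, aeval_C, algebraMap_eq]
  | add p q hp hq =>
    have : p + q - psiSub v (p + q) = (p - psiSub v p) + (q - psiSub v q) := by
      rw [map_add]; ring
    rw [this]
    exact dvd_add hp hq
  | mul_X p w hp =>
    rw [_root_.map_mul]
    have hXw : psiSub v (X w) = if w = v then 0 else X w := by
      simp [psiSub]
    by_cases hw : w = v
    · subst hw
      rw [hXw, if_pos rfl, mul_zero, sub_zero]
      exact Dvd.intro p (mul_comm (X w) p)
    · rw [hXw, if_neg hw]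
      have : p * X w - psiSub v p * X w = (p - psiSub v p) * X w := by ring
      rw [this]
      exact Dvd.dvd.mul_right hp (X w)

lemma X_dvd_of_psi_zero {v : Fin n × Fin n ⊕ Fin n} {p : PolyR n}
    (h : psiSub v p = 0) : X v ∣ p := by
  have := X_dvd_sub_psi v p
  rwa [h, sub_zero] at this

lemma psi_map_Lmat (G : DAG n) (a b : Fin n) :
    (Lmat G).map (psiSub (Sum.inl (a, b))).toRingHom = Lmat (G.deleteEdge a b) := by
  ext u v
  simp only [Matrix.map_apply, Lmat, Matrix.of_apply, DAG.deleteEdge]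
  by_cases h : (u, v) ∈ G.E
  · rw [if_pos h]
    by_cases h2 : (u, v) = (a, b)
    · rw [h2]
      simp [psiSub]
    · have : (u, v) ∈ G.E.erase (a, b) := Finset.mem_erase.2 ⟨h2, h⟩
      simp only [this, ↓reduceIte]
      simp only [AlgHom.toRingHom_eq_coe, RingHom.coe_coe]
      simp [psiSub, h2]
  · rw [if_neg h]
    have : (u, v) ∉ G.E.erase (a, b) := fun hc => h (Finset.mem_of_mem_erase hc)
    simp only [this, ↓reduceIte]
    simp

lemma psi_map_Smat (G : DAG n) (a b : Fin n) :
    (Smat G).map (psiSub (Sum.inl (a, b))).toRingHom = Smat (G.deleteEdge a b) := by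
  rw [Smat_map, psi_map_Lmat]
  have hd : (fun c => (psiSub (Sum.inl (a, b))).toRingHom (X (Sum.inr c))) =
      (fun c : Fin n => (X (Sum.inr c) : PolyR n)) := by
    funext c
    simp [psiSub]
  rw [hd]
  rfl

lemma evalParam_map_Lmat (G : DAG n) {Λ : Matrix (Fin n) (Fin n) ℝ} {ω : Fin n → ℝ}
    (hp : IsParam G Λ ω) : (Lmat G).map (evalParam Λ ω) = Λ := by
  ext u v
  simp only [Matrix.map_apply, Lmat, Matrix.of_apply]
  by_cases h : (u, v) ∈ G.E
  · rw [if_pos h]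
    simp [evalParam]
  · rw [if_neg h, map_zero, hp.1 u v h]

lemma supp_param (G : DAG n) {Λ : Matrix (Fin n) (Fin n) ℝ} {ω : Fin n → ℝ}
    (hp : IsParam G Λ ω) : Supp G Λ := fun u v h => hp.1 u v h

lemma evalParam_map_Smat (G : DAG n) {Λ : Matrix (Fin n) (Fin n) ℝ} {ω : Fin n → ℝ}
    (hp : IsParam G Λ ω) : (Smat G).map (evalParam Λ ω) = phi Λ ω := by
  rw [Smat_map, evalParam_map_Lmat G hp]
  have hd : (fun c => (evalParam Λ ω) (X (Sum.inr c))) = ω := by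
    funext c
    simp [evalParam]
  rw [hd]
  rfl

end CI

namespace CI

open Matrix MvPolynomial

variable {n : ℕ}

/-- Adjacency in the moral graph. -/
def moralAdj (H : DAG n) (u v : Fin n) : Prop :=
  u ≠ v ∧ ((u, v) ∈ H.E ∨ (v, u) ∈ H.E ∨ ∃ c, (u, c) ∈ H.E ∧ (v, c) ∈ H.E)

lemma moralAdj_symm {H : DAG n} {u v : Fin n} (h : moralAdj H u v) : moralAdj H v u := by
  obtain ⟨hne, h1 | h2 | ⟨c, hc1, hc2⟩⟩ := h
  · exact ⟨hne.symm, Or.inr (Or.inl h1)⟩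
  · exact ⟨hne.symm, Or.inl h2⟩
  · exact ⟨hne.symm, Or.inr (Or.inr ⟨c, hc2, hc1⟩)⟩

set_option maxHeartbeats 1000000 in
theorem subDet_zero_of_moral_sep_gen {F : Type} [Field F] (φ : PolyR n →+* F)
    (hφinj : Function.Injective φ) (H : DAG n) (i j : Fin n) (hij : i ≠ j)
    (K : Finset (Fin n)) (hiK : i ∉ K) (hjK : j ∉ K)
    (hsep : ¬ Relation.ReflTransGen (fun u v => moralAdj H u v ∧ v ∉ K) i j) :
    subDet (Smat H) (insert i K) (insert j K) = 0 := by
  classical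
  -- the matrices over F
  set L' : Matrix (Fin n) (Fin n) F := (Lmat H).map φ with hL'
  have hsupp : Supp H L' := (supp_Lmat H).map φ
  set B1 : Matrix (Fin n) (Fin n) F := 1 - L' with hB1
  set W' : Matrix (Fin n) (Fin n) F := Matrix.diagonal (fun a => φ (X (Sum.inr a))) with hW'
  set Winv : Matrix (Fin n) (Fin n) F := Matrix.diagonal (fun a => (φ (X (Sum.inr a)))⁻¹) with hWinv
  have hωne : ∀ a : Fin n, φ (X (Sum.inr a)) ≠ 0 := by
    intro a h
    have h2 : (X (Sum.inr a) : PolyR n) = 0 := hφinj (by rw [h, map_zero])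
    exact MvPolynomial.X_ne_zero _ h2
  have hWW : W' * Winv = 1 := by
    rw [hW', hWinv, Matrix.diagonal_mul_diagonal]
    rw [show (fun a => φ (X (Sum.inr a)) * (φ (X (Sum.inr a)))⁻¹) = fun _ => (1 : F) by
      funext a; exact mul_inv_cancel₀ (hωne a)]
    exact Matrix.diagonal_one
  set Sg : Matrix (Fin n) (Fin n) F := (Smat H).map φ with hSg
  have hSgeq : Sg = (B1⁻¹)ᵀ * W' * B1⁻¹ := by
    rw [hSg, Smat_map]
  set Kh : Matrix (Fin n) (Fin n) F := B1 * Winv * B1ᵀ with hKh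
  have hSK : Sg * Kh = 1 := by
    rw [hSgeq, hKh]
    have h1 : B1⁻¹ * B1 = 1 := hsupp.inv_mul_one_sub
    have h2 : B1 * B1⁻¹ = 1 := hsupp.one_sub_mul_inv
    calc (B1⁻¹)ᵀ * W' * B1⁻¹ * (B1 * Winv * B1ᵀ)
        = (B1⁻¹)ᵀ * W' * ((B1⁻¹ * B1) * Winv) * B1ᵀ := by
          simp only [Matrix.mul_assoc]
      _ = (B1⁻¹)ᵀ * (W' * Winv) * B1ᵀ := by rw [h1, Matrix.one_mul]; simp only [Matrix.mul_assoc]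
      _ = (B1⁻¹)ᵀ * B1ᵀ := by rw [hWW, Matrix.mul_one]
      _ = (B1 * B1⁻¹)ᵀ := by rw [Matrix.transpose_mul]
      _ = 1 := by rw [h2, Matrix.transpose_one]
  -- support of Kh on the moral graph
  have hKsupp : ∀ u v : Fin n, u ≠ v → ¬ moralAdj H u v → Kh u v = 0 := by
    intro u v huv hmor
    have hE1 : (u, v) ∉ H.E := fun h => hmor ⟨huv, Or.inl h⟩
    have hE2 : (v, u) ∉ H.E := fun h => hmor ⟨huv, Or.inr (Or.inl h)⟩
    have hEc : ∀ c, ¬ ((u, c) ∈ H.E ∧ (v, c) ∈ H.E) := fun c h =>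
      hmor ⟨huv, Or.inr (Or.inr ⟨c, h⟩)⟩
    rw [hKh, Matrix.mul_assoc, Matrix.mul_apply]
    refine Finset.sum_eq_zero (fun c _ => ?_)
    rw [Matrix.mul_apply]
    rw [Finset.sum_eq_single c]
    · rw [hWinv, Matrix.diagonal_apply_eq, Matrix.transpose_apply]
      by_cases hcu : c = u
      · subst hcu
        have : B1 v c = 0 := by
          rw [hB1, Matrix.sub_apply, Matrix.one_apply_ne (Ne.symm huv), hL',
            Matrix.map_apply, (supp_Lmat H) v c hE2, map_zero, zero_sub, neg_zero]
        rw [this]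
        simp
      · by_cases hcv : c = v
        · subst hcv
          have : B1 u c = 0 := by
            rw [hB1, Matrix.sub_apply, Matrix.one_apply_ne huv, hL',
              Matrix.map_apply, (supp_Lmat H) u c hE1, map_zero, zero_sub, neg_zero]
          rw [this]
          simp
        · rcases Classical.em ((u, c) ∈ H.E) with h1 | h1
          · have h2 : (v, c) ∉ H.E := fun h => hEc c ⟨h1, h⟩
            have : B1 v c = 0 := by
              rw [hB1, Matrix.sub_apply, Matrix.one_apply_ne (fun h => hcv h.symm), hL',
                Matrix.map_apply, (supp_Lmat H) v c h2, map_zero, zero_sub, neg_zero]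
            rw [this]
            simp
          · have : B1 u c = 0 := by
              rw [hB1, Matrix.sub_apply, Matrix.one_apply_ne (fun h => hcu h.symm), hL',
                Matrix.map_apply, (supp_Lmat H) u c h1, map_zero, zero_sub, neg_zero]
            rw [this]
            simp
    · intro c' _ hc'
      rw [hWinv, Matrix.diagonal_apply_ne' _ hc', zero_mul]
    · intro h
      exact absurd (Finset.mem_univ c) h
  -- the moral-reachable set
  set P : Set (Fin n) := {v | Relation.ReflTransGen (fun u v => moralAdj H u v ∧ v ∉ K) i v}
    with hP
  have hiP : i ∈ P := Relation.ReflTransGen.refl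
  have hjP : j ∉ P := hsep
  have hPnotK : ∀ v ∈ P, v ∉ K := by
    intro v hv
    rcases (Relation.reflTransGen_iff_eq_or_transGen).1 hv with h | h
    · rw [h]; exact hiK
    · obtain ⟨w, _, hwv⟩ := Relation.TransGen.tail'_iff.1 h
      exact hwv.2
  have hblock : ∀ u ∈ P, ∀ v : Fin n, v ∉ P → v ∉ K → Kh u v = 0 := by
    intro u hu v hvP hvK
    refine hKsupp u v (fun h => hvP (h ▸ hu)) (fun hmor => ?_)
    exact hvP (hu.tail ⟨hmor, hvK⟩)
  -- the kernel construction
  set Q : Finset (Fin n) := Finset.univ.filter (fun v => v ∉ K ∧ v ∉ P) with hQ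
  have hjQ : j ∈ Q := by
    rw [hQ, Finset.mem_filter]
    exact ⟨Finset.mem_univ j, hjK, hjP⟩
  set Q' : Finset (Fin n) := Q.erase j with hQ'
  have hcard : Q'.card < Q.card := Finset.card_erase_lt_of_mem hjQ
  set Mqq : Matrix {x // x ∈ Q'} {x // x ∈ Q} F := fun q' q => Kh q'.1 q.1 with hMqq
  have hker : ∃ x : {x // x ∈ Q} → F, x ≠ 0 ∧ Mqq.mulVec x = 0 := by
    by_contra hno
    push_neg at hno
    have hinj : Function.Injective Mqq.mulVecLin := by
      rw [← LinearMap.ker_eq_bot, LinearMap.ker_eq_bot']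
      intro x hx
      by_contra hxne
      exact (hno x hxne) hx
    have := LinearMap.finrank_le_finrank_of_injective hinj
    rw [Module.finrank_fintype_fun_eq_card, Module.finrank_fintype_fun_eq_card,
      Fintype.card_coe, Fintype.card_coe] at this
    omega
  obtain ⟨x, hxne, hxker⟩ := hker
  set ub : Fin n → F := fun v => if h : v ∈ Q then x ⟨v, h⟩ else 0 with hub
  set xb : Fin n → F := Kh *ᵥ ub with hxb
  have hSx : Sg *ᵥ xb = ub := by
    rw [hxb, Matrix.mulVec_mulVec, hSK, Matrix.one_mulVec]
  have hxbP : ∀ v ∈ P, xb v = 0 := by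
    intro v hv
    rw [hxb, Matrix.mulVec, dotProduct]
    refine Finset.sum_eq_zero (fun w _ => ?_)
    by_cases hw : w ∈ Q
    · have : Kh v w = 0 := by
        rw [hQ, Finset.mem_filter] at hw
        exact hblock v hv w hw.2.2 hw.2.1
      rw [this, zero_mul]
    · rw [hub]
      simp only [dif_neg hw, mul_zero]
  have hsum_eq : ∀ v : Fin n, (Kh *ᵥ ub) v = ∑ q : {x // x ∈ Q}, Kh v q.1 * x q := by
    intro v
    have h0 : (Kh *ᵥ ub) v = ∑ w : Fin n, Kh v w * ub w := by
      simp [Matrix.mulVec, dotProduct]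
    rw [h0]
    have h1 : ∑ w : Fin n, Kh v w * ub w = ∑ w ∈ Q, Kh v w * ub w := by
      refine (Finset.sum_subset (Finset.subset_univ Q) ?_).symm
      intro w _ hw
      rw [hub]
      simp only [dif_neg hw, mul_zero]
    rw [h1, ← Finset.sum_coe_sort Q (fun w => Kh v w * ub w)]
    refine Finset.sum_congr rfl (fun q _ => ?_)
    rw [hub]
    simp only [dif_pos q.2]
  have hxbQ' : ∀ v : Fin n, v ∈ Q' → xb v = 0 := by
    intro v hv
    have h0 : Mqq.mulVec x ⟨v, hv⟩ = 0 := by rw [hxker]; rfl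
    have h1 : Mqq.mulVec x ⟨v, hv⟩ = ∑ q : {x // x ∈ Q}, Kh v q.1 * x q := by
      simp [Matrix.mulVec, dotProduct, hMqq]
    rw [hxb, hsum_eq v, ← h1, h0]
  have hxbsupp : ∀ v : Fin n, v ∉ insert j K → xb v = 0 := by
    intro v hv
    rw [Finset.mem_insert] at hv
    push_neg at hv
    by_cases hvP : v ∈ P
    · exact hxbP v hvP
    · refine hxbQ' v (Finset.mem_erase.2 ⟨hv.1, ?_⟩)
      rw [hQ, Finset.mem_filter]
      exact ⟨Finset.mem_univ v, hv.2, hvP⟩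
  have hub_ne : ub ≠ 0 := by
    intro h
    apply hxne
    funext q
    have h2 := congrFun h q.1
    rw [hub] at h2
    simp only [dif_pos q.2] at h2
    rw [show x ⟨(q : Fin n), q.2⟩ = x q by congr] at h2
    exact h2
  have hxb_ne : xb ≠ 0 := by
    intro h
    apply hub_ne
    rw [← hSx, h, Matrix.mulVec_zero]
  have hubA : ∀ v : Fin n, v ∈ insert i K → ub v = 0 := by
    intro v hv
    have hvQ : v ∉ Q := by
      rw [hQ, Finset.mem_filter]
      rcases Finset.mem_insert.1 hv with h | h
      · subst h
        rintro ⟨-, -, hP'⟩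
        exact hP' hiP
      · rintro ⟨-, hK', -⟩
        exact hK' h
    rw [hub]
    simp only [dif_neg hvQ]
  have hcardAB : (insert j K).card = (insert i K).card := by
    rw [Finset.card_insert_of_notMem hjK, Finset.card_insert_of_notMem hiK]
  have hminor : subDet Sg (insert i K) (insert j K) = 0 := by
    unfold subDet
    rw [dif_pos hcardAB]
    set A := insert i K with hA
    set B := insert j K with hB
    set rIso := A.orderIsoOfFin rfl with hrIso
    set cIso := B.orderIsoOfFin hcardAB with hcIso
    set N : Matrix (Fin A.card) (Fin A.card) F :=
      Matrix.of (fun p q => Sg ((rIso p) : Fin n) ((cIso q) : Fin n)) with hN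
    set y : Fin A.card → F := fun q => xb ((cIso q) : Fin n) with hy
    have hNy : N *ᵥ y = 0 := by
      funext p
      have h0 : (N *ᵥ y) p = ∑ q, Sg ((rIso p) : Fin n) ((cIso q) : Fin n) * xb ((cIso q) : Fin n) := by
        simp [Matrix.mulVec, dotProduct, hN, hy]
      rw [h0]
      have h2 : ∑ q, Sg ((rIso p) : Fin n) ((cIso q) : Fin n) * xb ((cIso q) : Fin n) =
          ∑ b : {x // x ∈ B}, Sg ((rIso p) : Fin n) b.1 * xb b.1 :=
        Fintype.sum_equiv cIso.toEquiv _ _ (fun q => rfl)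
      rw [h2, Finset.sum_coe_sort B (fun b => Sg ((rIso p) : Fin n) b * xb b)]
      have h3 : ∑ b ∈ B, Sg ((rIso p) : Fin n) b * xb b =
          ∑ b : Fin n, Sg ((rIso p) : Fin n) b * xb b := by
        refine Finset.sum_subset (Finset.subset_univ B) ?_
        intro b _ hb
        rw [hxbsupp b hb, mul_zero]
      rw [h3]
      have h4 : ∑ b : Fin n, Sg ((rIso p) : Fin n) b * xb b = (Sg *ᵥ xb) ((rIso p) : Fin n) := by
        simp [Matrix.mulVec, dotProduct]
      rw [h4, hSx]
      have h5 : ((rIso p) : Fin n) ∈ A := (rIso p).2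
      rw [hubA _ h5]
      rfl
    have hy_ne : y ≠ 0 := by
      obtain ⟨v, hv⟩ : ∃ v, xb v ≠ 0 := by
        by_contra hall
        push_neg at hall
        exact hxb_ne (funext hall)
      have hvB : v ∈ B := by
        by_contra hvB
        exact hv (hxbsupp v hvB)
      intro h
      have h2 := congrFun h (cIso.symm ⟨v, hvB⟩)
      rw [hy] at h2
      simp only [OrderIso.apply_symm_apply] at h2
      exact hv h2
    exact Matrix.exists_mulVec_eq_zero_iff.mp ⟨y, hy_ne, hNy⟩
  have hfinal := subDet_map φ (Smat H) (insert i K) (insert j K)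
  rw [← hSg] at hfinal
  apply hφinj
  rw [hfinal, hminor, map_zero]

theorem subDet_zero_of_moral_sep (H : DAG n) (i j : Fin n) (hij : i ≠ j)
    (K : Finset (Fin n)) (hiK : i ∉ K) (hjK : j ∉ K)
    (hsep : ¬ Relation.ReflTransGen (fun u v => moralAdj H u v ∧ v ∉ K) i j) :
    subDet (Smat H) (insert i K) (insert j K) = 0 :=
  subDet_zero_of_moral_sep_gen (algebraMap (PolyR n) (FractionRing (PolyR n)))
    (IsFractionRing.injective (PolyR n) (FractionRing (PolyR n)))
    H i j hij K hiK hjK hsep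

end CI


namespace CI

open Relation

variable {n : ℕ}

/-- An undirected walk in a DAG (like `GPath` but without injectivity). -/
structure Walk (G : DAG n) (i j : Fin n) where
  len : ℕ
  v : ℕ → Fin n
  start_eq : v 0 = i
  end_eq : v len = j
  adj : ∀ t : ℕ, t < len → (v t, v (t + 1)) ∈ G.E ∨ (v (t + 1), v t) ∈ G.E

namespace Walk

variable {G : DAG n} {i j m : Fin n} {K : Finset (Fin n)}

def Col (p : Walk G i j) (t : ℕ) : Prop :=
  0 < t ∧ t < p.len ∧ (p.v (t - 1), p.v t) ∈ G.E ∧ (p.v (t + 1), p.v t) ∈ G.E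

def Conn (p : Walk G i j) (K : Finset (Fin n)) : Prop :=
  (∀ t : ℕ, 0 < t → t < p.len → ¬ p.Col t → p.v t ∉ K) ∧
  (∀ t : ℕ, p.Col t → ∃ d ∈ K, G.desc (p.v t) d)

def nil (x : Fin n) : Walk G x x :=
  ⟨0, fun _ => x, rfl, rfl, fun t ht => absurd ht (Nat.not_lt_zero t)⟩

lemma nil_len (x : Fin n) : (nil (G := G) x).len = 0 := rfl

lemma conn_nil (x : Fin n) : (nil (G := G) x).Conn K := by
  constructor
  · intro t ht0 htl
    exact absurd htl (by rw [nil_len]; omega)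
  · intro t hc
    exact absurd hc.2.1 (by rw [nil_len]; omega)

def single {x y : Fin n} (h : (x, y) ∈ G.E ∨ (y, x) ∈ G.E) : Walk G x y where
  len := 1
  v := fun t => if t = 0 then x else y
  start_eq := rfl
  end_eq := rfl
  adj := fun t ht => by
    have ht' : t = 0 := by omega
    subst ht'
    simpa using h

lemma single_len {x y : Fin n} (h : (x, y) ∈ G.E ∨ (y, x) ∈ G.E) :
    (single h).len = 1 := rfl

lemma single_v0 {x y : Fin n} (h : (x, y) ∈ G.E ∨ (y, x) ∈ G.E) :
    (single h).v 0 = x := rfl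

lemma single_v1 {x y : Fin n} (h : (x, y) ∈ G.E ∨ (y, x) ∈ G.E) :
    (single h).v 1 = y := rfl

lemma conn_single {x y : Fin n} (h : (x, y) ∈ G.E ∨ (y, x) ∈ G.E) :
    (single h).Conn K := by
  constructor
  · intro t ht0 htl
    have h1 : t < 1 := htl
    exact absurd h1 (by omega)
  · intro t hc
    have h1 : t < 1 := hc.2.1
    have h0 : 0 < t := hc.1
    exact absurd h1 (by omega)

def append (p : Walk G i m) (q : Walk G m j) : Walk G i j where
  len := p.len + q.len
  v := fun t => if t < p.len then p.v t else q.v (t - p.len)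
  start_eq := by
    show (if 0 < p.len then p.v 0 else q.v (0 - p.len)) = i
    by_cases h : 0 < p.len
    · rw [if_pos h, p.start_eq]
    · rw [if_neg h]
      have h0 : p.len = 0 := by omega
      have h1 : q.v 0 = m := q.start_eq
      have h2 : p.v 0 = i := p.start_eq
      have h3 : p.v p.len = m := p.end_eq
      rw [h0] at h3
      simp only [Nat.zero_sub, h1, ← h3, h2]
  end_eq := by
    show (if p.len + q.len < p.len then p.v (p.len + q.len) else q.v (p.len + q.len - p.len)) = j
    rw [if_neg (by omega)]
    have : p.len + q.len - p.len = q.len := by omega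
    rw [this, q.end_eq]
  adj := by
    intro t ht
    show ((if t < p.len then p.v t else q.v (t - p.len)),
        (if t + 1 < p.len then p.v (t + 1) else q.v (t + 1 - p.len))) ∈ G.E ∨
      ((if t + 1 < p.len then p.v (t + 1) else q.v (t + 1 - p.len)),
        (if t < p.len then p.v t else q.v (t - p.len))) ∈ G.E
    by_cases h : t + 1 ≤ p.len
    · rw [if_pos (by omega)]
      by_cases h2 : t + 1 < p.len
      · rw [if_pos h2]
        exact p.adj t (by omega)
      · rw [if_neg h2]
        have h3 : t + 1 = p.len := by omega
        have h4 : q.v (t + 1 - p.len) = p.v (t + 1) := by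
          rw [h3]
          simp only [Nat.sub_self, q.start_eq, p.end_eq]
        rw [h4]
        exact p.adj t (by omega)
    · rw [if_neg (by omega), if_neg (by omega)]
      have h1 : t - p.len < q.len := by omega
      have h2 : t + 1 - p.len = (t - p.len) + 1 := by omega
      rw [h2]
      exact q.adj (t - p.len) h1

lemma append_len (p : Walk G i m) (q : Walk G m j) :
    (p.append q).len = p.len + q.len := rfl

lemma append_v_le (p : Walk G i m) (q : Walk G m j) {t : ℕ} (h : t ≤ p.len) :
    (p.append q).v t = p.v t := by
  show (if t < p.len then p.v t else q.v (t - p.len)) = p.v t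
  by_cases h2 : t < p.len
  · rw [if_pos h2]
  · rw [if_neg h2]
    have h3 : t = p.len := by omega
    rw [h3]
    simp only [Nat.sub_self, q.start_eq, p.end_eq]

lemma append_v_ge (p : Walk G i m) (q : Walk G m j) {t : ℕ} (h : p.len ≤ t) :
    (p.append q).v t = q.v (t - p.len) := by
  show (if t < p.len then p.v t else q.v (t - p.len)) = q.v (t - p.len)
  by_cases h2 : t < p.len
  · omega
  · rw [if_neg h2]

/-- Appending connecting walks, given the junction condition. -/
lemma Conn.append {p : Walk G i m} {q : Walk G m j} (hp : p.Conn K) (hq : q.Conn K)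
    (hjun : p.len = 0 ∨ q.len = 0 ∨
      (((p.v (p.len - 1), m) ∈ G.E ∧ (q.v 1, m) ∈ G.E → ∃ d ∈ K, G.desc m d) ∧
       (¬ ((p.v (p.len - 1), m) ∈ G.E ∧ (q.v 1, m) ∈ G.E) → m ∉ K))) :
    (p.append q).Conn K := by
  have hlen := append_len p q
  -- collider transfer facts
  have hcolp : ∀ t : ℕ, 0 < t → t < p.len → ((p.append q).Col t ↔ p.Col t) := by
    intro t ht0 htl
    unfold Col
    rw [append_v_le p q (by omega : t - 1 ≤ p.len), append_v_le p q (by omega : t ≤ p.len),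
      append_v_le p q (by omega : t + 1 ≤ p.len), hlen]
    constructor
    · rintro ⟨a, _, c, d⟩
      exact ⟨a, htl, c, d⟩
    · rintro ⟨a, _, c, d⟩
      exact ⟨a, by omega, c, d⟩
  have hcolq : ∀ t : ℕ, p.len < t → t < p.len + q.len → ((p.append q).Col t ↔ q.Col (t - p.len)) := by
    intro t ht0 htl
    unfold Col
    rw [append_v_ge p q (by omega : p.len ≤ t - 1), append_v_ge p q (by omega : p.len ≤ t),
      append_v_ge p q (by omega : p.len ≤ t + 1), hlen]
    have e1 : t - 1 - p.len = t - p.len - 1 := by omega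
    have e2 : t + 1 - p.len = (t - p.len) + 1 := by omega
    rw [e1, e2]
    constructor
    · rintro ⟨a, _, c, d⟩
      exact ⟨by omega, by omega, c, d⟩
    · rintro ⟨a, b, c, d⟩
      exact ⟨by omega, by omega, c, d⟩
  have hjunc : ∀ h0 : 0 < p.len, ∀ hql : 0 < q.len,
      ((p.append q).Col p.len ↔ ((p.v (p.len - 1), m) ∈ G.E ∧ (q.v 1, m) ∈ G.E)) := by
    intro h0 hql
    unfold Col
    rw [append_v_le p q (by omega : p.len - 1 ≤ p.len), append_v_le p q (le_refl p.len),
      append_v_ge p q (by omega : p.len ≤ p.len + 1), hlen, p.end_eq]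
    have e1 : p.len + 1 - p.len = 1 := by omega
    rw [e1]
    constructor
    · rintro ⟨_, _, c, d⟩
      exact ⟨c, d⟩
    · rintro ⟨c, d⟩
      exact ⟨h0, by omega, c, d⟩
  constructor
  · intro t ht0 htl hncol
    rw [hlen] at htl
    rcases Nat.lt_trichotomy t p.len with hc | hc | hc
    · rw [append_v_le p q (by omega : t ≤ p.len)]
      exact hp.1 t ht0 hc (fun hcol => hncol ((hcolp t ht0 hc).2 hcol))
    · subst hc
      have hql : 0 < q.len := by omega
      rcases hjun with h | h | ⟨h1, h2⟩
      · omega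
      · omega
      · rw [append_v_le p q (le_refl p.len), p.end_eq]
        refine h2 (fun hboth => hncol ?_)
        exact (hjunc ht0 hql).2 hboth
    · rw [append_v_ge p q (by omega : p.len ≤ t)]
      refine hq.1 (t - p.len) (by omega) (by omega) (fun hcol => hncol ?_)
      exact (hcolq t hc (by omega)).2 hcol
  · intro t hcol
    have ht0 : 0 < t := hcol.1
    have htl : t < p.len + q.len := by
      have := hcol.2.1
      rwa [hlen] at this
    rcases Nat.lt_trichotomy t p.len with hc | hc | hc
    · obtain ⟨d, hd, hdesc⟩ := hp.2 t ((hcolp t ht0 hc).1 hcol)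
      rw [append_v_le p q (by omega : t ≤ p.len)]
      exact ⟨d, hd, hdesc⟩
    · subst hc
      have hql : 0 < q.len := by omega
      rcases hjun with h | h | ⟨h1, h2⟩
      · omega
      · omega
      · rw [append_v_le p q (le_refl p.len), p.end_eq]
        exact h1 ((hjunc ht0 hql).1 hcol)
    · obtain ⟨d, hd, hdesc⟩ := hq.2 (t - p.len) ((hcolq t hc htl).1 hcol)
      rw [append_v_ge p q (by omega : p.len ≤ t)]
      exact ⟨d, hd, hdesc⟩

lemma conn_of_forward (p : Walk G i j) (hf : ∀ t, t < p.len → (p.v t, p.v (t + 1)) ∈ G.E)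
    (hK : ∀ t, 0 < t → t < p.len → p.v t ∉ K) : p.Conn K := by
  have hnc : ∀ t, ¬ p.Col t := by
    rintro t ⟨ht0, htl, h1, h2⟩
    exact G.no_two_cycle (hf t htl) h2
  exact ⟨fun t a b _ => hK t a b, fun t hc => absurd hc (hnc t)⟩

lemma conn_of_backward (p : Walk G i j) (hb : ∀ t, t < p.len → (p.v (t + 1), p.v t) ∈ G.E)
    (hK : ∀ t, 0 < t → t < p.len → p.v t ∉ K) : p.Conn K := by
  have hnc : ∀ t, ¬ p.Col t := by
    rintro t ⟨ht0, htl, h1, h2⟩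
    have h3 := hb (t - 1) (by omega)
    rw [show t - 1 + 1 = t by omega] at h3
    exact G.no_two_cycle h1 h3
  exact ⟨fun t a b _ => hK t a b, fun t hc => absurd hc (hnc t)⟩

lemma exists_dirWalk {r : Fin n → Fin n → Prop} (hr : ∀ x y, r x y → (x, y) ∈ G.E)
    {u w : Fin n} (h : Relation.ReflTransGen r u w) :
    ∃ W : Walk G u w, (∀ t, t < W.len → (W.v t, W.v (t + 1)) ∈ G.E) ∧
      (∀ t, t ≤ W.len → Relation.ReflTransGen r u (W.v t) ∧
        Relation.ReflTransGen r (W.v t) w) := by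
  induction h using Relation.ReflTransGen.head_induction_on with
  | refl =>
    refine ⟨nil w, ?_, ?_⟩
    · intro t ht
      rw [nil_len] at ht
      omega
    · intro t _
      exact ⟨Relation.ReflTransGen.refl, Relation.ReflTransGen.refl⟩
  | @head a c hac hcb ih =>
    obtain ⟨W, hf, hinfo⟩ := ih
    set s : Walk G a c := single (Or.inl (hr _ _ hac)) with hs
    have hslen : s.len = 1 := rfl
    refine ⟨s.append W, ?_, ?_⟩
    · intro t ht
      rw [append_len, hslen] at ht
      by_cases h0 : t = 0
      · subst h0
        rw [append_v_le s W (by omega), append_v_le s W (by omega), hs]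
        rw [single_v0, single_v1]
        exact hr _ _ hac
      · rw [append_v_ge s W (by omega), append_v_ge s W (by omega), hslen]
        have e1 : t + 1 - 1 = (t - 1) + 1 := by omega
        rw [e1]
        exact hf (t - 1) (by omega)
    · intro t ht
      by_cases h0 : t = 0
      · subst h0
        rw [append_v_le s W (by omega), hs, single_v0]
        refine ⟨Relation.ReflTransGen.refl, Relation.ReflTransGen.head hac ?_⟩
        have := (hinfo 0 (Nat.zero_le _)).2
        rwa [W.start_eq] at this
      · rw [append_v_ge s W (by omega), hslen]
        have h1 := hinfo (t - 1) (by rw [append_len, hslen] at ht; omega)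
        exact ⟨Relation.ReflTransGen.head hac h1.1, h1.2⟩

lemma exists_revWalk {r : Fin n → Fin n → Prop} (hr : ∀ x y, r x y → (x, y) ∈ G.E)
    {u w : Fin n} (h : Relation.ReflTransGen r u w) :
    ∃ W : Walk G w u, (∀ t, t < W.len → (W.v (t + 1), W.v t) ∈ G.E) ∧
      (∀ t, t ≤ W.len → Relation.ReflTransGen r u (W.v t) ∧
        Relation.ReflTransGen r (W.v t) w) := by
  induction h using Relation.ReflTransGen.head_induction_on with
  | refl =>
    refine ⟨nil w, ?_, ?_⟩
    · intro t ht
      rw [nil_len] at ht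
      omega
    · intro t _
      exact ⟨Relation.ReflTransGen.refl, Relation.ReflTransGen.refl⟩
  | @head a c hac hcb ih =>
    obtain ⟨W, hb, hinfo⟩ := ih
    set s : Walk G c a := single (Or.inr (hr _ _ hac)) with hs
    have hslen : s.len = 1 := rfl
    refine ⟨W.append s, ?_, ?_⟩
    · intro t ht
      rw [append_len, hslen] at ht
      by_cases h0 : t < W.len
      · rw [append_v_le W s (by omega), append_v_le W s (by omega)]
        exact hb t h0
      · have h1 : t = W.len := by omega
        subst h1
        rw [append_v_le W s (le_refl _), append_v_ge W s (by omega), W.end_eq]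
        have e1 : W.len + 1 - W.len = 1 := by omega
        rw [e1, hs, single_v1]
        exact hr _ _ hac
    · intro t ht
      rw [append_len, hslen] at ht
      by_cases h0 : t ≤ W.len
      · rw [append_v_le W s h0]
        have h1 := hinfo t h0
        exact ⟨Relation.ReflTransGen.head hac h1.1, h1.2⟩
      · have h1 : t = W.len + 1 := by omega
        subst h1
        rw [append_v_ge W s (by omega)]
        have e1 : W.len + 1 - W.len = 1 := by omega
        rw [e1, hs, single_v1]
        exact ⟨Relation.ReflTransGen.refl, Relation.ReflTransGen.head hac hcb⟩

lemma gpath_of_inj_walk {K : Finset (Fin n)} (W : Walk G i j) (hW : W.Conn K)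
    (hinj : ∀ s t, s ≤ W.len → t ≤ W.len → W.v s = W.v t → s = t) :
    ∃ p : GPath G i j, p.DConn K := by
  set v' : ℕ → Fin n := fun t => if t ≤ W.len then W.v t else W.v W.len with hv'
  have hval : ∀ t, t ≤ W.len → v' t = W.v t := fun t ht => if_pos ht
  refine ⟨⟨W.len, v', by rw [hval 0 (Nat.zero_le _)]; exact W.start_eq,
    by rw [hval W.len (le_refl _)]; exact W.end_eq, ?_, ?_, ?_⟩, ?_⟩
  · intro a b ha hb hab
    rw [hval a ha, hval b hb] at hab
    exact hinj a b ha hb hab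
  · intro t ht
    rw [hval t (by omega), hval (t + 1) (by omega)]
    exact W.adj t ht
  · intro t ht
    show v' t = v' W.len
    rw [hval W.len (le_refl _)]
    by_cases h : t ≤ W.len
    · have : t = W.len := by omega
      rw [this, hval W.len (le_refl _)]
    · exact if_neg h
  · set p : GPath G i j := ⟨W.len, v', _, _, _, _, _⟩
    have hcol : ∀ t, 0 < t → t < W.len → (p.IsCollider t ↔ W.Col t) := by
      intro t ht0 htl
      unfold GPath.IsCollider Col
      show (0 < t ∧ t < W.len ∧ (v' (t-1), v' t) ∈ G.E ∧ (v' (t+1), v' t) ∈ G.E) ↔ _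
      rw [hval (t-1) (by omega), hval t (by omega), hval (t+1) (by omega)]
    constructor
    · intro t ht0 htl hncol
      have htl' : t < W.len := htl
      show v' t ∉ K
      rw [hval t (by omega)]
      exact hW.1 t ht0 htl' (fun hc => hncol ((hcol t ht0 htl').2 hc))
    · intro t hcolt
      have ht0 : 0 < t := hcolt.1
      have htl : t < W.len := hcolt.2.1
      obtain ⟨dk, hdk, hdesc⟩ := hW.2 t ((hcol t ht0 htl).1 hcolt)
      show ∃ d ∈ K, G.desc (v' t) d
      rw [hval t (by omega)]
      exact ⟨dk, hdk, hdesc⟩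

theorem exists_gpath_of_conn_walk {K : Finset (Fin n)}
    (hij : i ≠ j) (hjK : j ∉ K) :
    ∀ L : ℕ, ∀ W : Walk G i j, W.len ≤ L → W.Conn K → ∃ p : GPath G i j, p.DConn K := by
  intro L
  induction L with
  | zero =>
    intro W hL hW
    have hL0 : W.len = 0 := by omega
    have h2 := W.end_eq
    rw [hL0, W.start_eq] at h2
    exact absurd h2 hij
  | succ L ih =>
    intro W hL hW
    by_cases hinj : ∀ s t, s ≤ W.len → t ≤ W.len → W.v s = W.v t → s = t
    · exact gpath_of_inj_walk W hW hinj
    · push_neg at hinj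
      obtain ⟨s0, t0, hs0, ht0, heq0, hne0⟩ := hinj
      obtain ⟨s, t, hs, ht, hlt, heq⟩ :
          ∃ s t, s ≤ W.len ∧ t ≤ W.len ∧ s < t ∧ W.v s = W.v t := by
        rcases hne0.lt_or_gt with h | h
        exacts [⟨s0, t0, hs0, ht0, h, heq0⟩, ⟨t0, s0, ht0, hs0, h, heq0.symm⟩]
      set d := t - s with hd
      have hd0 : 0 < d := by omega
      have hslen : s ≤ W.len - d := by omega
      set W' : Walk G i j := ⟨W.len - d,
        fun x => if x ≤ s then W.v x else W.v (x + d),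
        by
          show (if 0 ≤ s then W.v 0 else W.v (0 + d)) = i
          rw [if_pos (Nat.zero_le s)]
          exact W.start_eq,
        by
          show (if W.len - d ≤ s then W.v (W.len - d) else W.v (W.len - d + d)) = j
          by_cases h : W.len - d ≤ s
          · rw [if_pos h]
            have hse : W.len - d = s := by omega
            rw [hse, heq, show t = W.len by omega]
            exact W.end_eq
          · rw [if_neg h, show W.len - d + d = W.len by omega]
            exact W.end_eq,
        by
          intro x hx
          show ((if x ≤ s then W.v x else W.v (x + d)),
              (if x + 1 ≤ s then W.v (x + 1) else W.v (x + 1 + d))) ∈ G.E ∨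
            ((if x + 1 ≤ s then W.v (x + 1) else W.v (x + 1 + d)),
              (if x ≤ s then W.v x else W.v (x + d))) ∈ G.E
          by_cases h : x + 1 ≤ s
          · rw [if_pos (by omega : x ≤ s), if_pos h]
            exact W.adj x (by omega)
          · by_cases h2 : x ≤ s
            · have hxs : x = s := by omega
              rw [if_pos h2, if_neg h, hxs, heq, show s + 1 + d = t + 1 by omega]
              exact W.adj t (by omega)
            · rw [if_neg h2, if_neg h, show x + 1 + d = (x + d) + 1 by omega]
              exact W.adj (x + d) (by omega)⟩ with hW'
      have hlen' : W'.len = W.len - d := rfl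
      have hv_le : ∀ x, x ≤ s → W'.v x = W.v x := fun x hx => if_pos hx
      have hv_ge : ∀ x, s ≤ x → W'.v x = W.v (x + d) := by
        intro x hx
        by_cases h : x ≤ s
        · have hxs : x = s := by omega
          subst hxs
          rw [hv_le x (le_refl x), heq, show x + d = t by omega]
        · exact if_neg h
      have hcolA : ∀ y, 0 < y → y < s → (W'.Col y ↔ W.Col y) := by
        intro y hy0 hys
        unfold Col
        rw [hlen', hv_le (y - 1) (by omega), hv_le y (by omega), hv_le (y + 1) (by omega)]
        constructor
        · rintro ⟨a, b, c, e⟩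
          exact ⟨a, by omega, c, e⟩
        · rintro ⟨a, b, c, e⟩
          exact ⟨a, by omega, c, e⟩
      have hcolB : ∀ y, s < y → y < W.len - d → (W'.Col y ↔ W.Col (y + d)) := by
        intro y hys hyl
        unfold Col
        rw [hlen', hv_ge (y - 1) (by omega), hv_ge y (by omega), hv_ge (y + 1) (by omega),
          show y - 1 + d = y + d - 1 by omega, show y + 1 + d = y + d + 1 by omega]
        constructor
        · rintro ⟨a, b, c, e⟩
          exact ⟨by omega, by omega, c, e⟩
        · rintro ⟨a, b, c, e⟩
          exact ⟨by omega, by omega, c, e⟩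
      have hconn' : W'.Conn K := by
        constructor
        · intro y hy0 hyl hncol
          rw [hlen'] at hyl
          rcases Nat.lt_trichotomy y s with hc | hc | hc
          · rw [hv_le y (by omega)]
            exact hW.1 y hy0 (by omega) (fun hcol => hncol ((hcolA y hy0 hc).2 hcol))
          · subst hc
            rw [hv_le y (le_refl y)]
            by_cases hA : (W.v (y - 1), W.v y) ∈ G.E
            · have hB : (W.v (t + 1), W.v t) ∉ G.E := by
                intro hB
                refine hncol ⟨hy0, by rw [hlen']; omega, ?_, ?_⟩
                · rw [hv_le (y - 1) (by omega), hv_le y (le_refl y)]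
                  exact hA
                · rw [hv_ge (y + 1) (by omega), hv_le y (le_refl y),
                    show y + 1 + d = t + 1 by omega, heq]
                  exact hB
              by_cases hT : t = W.len
              · rw [heq, hT, W.end_eq]
                exact hjK
              · have hnct : ¬ W.Col t := by
                  rintro ⟨_, _, _, h2⟩
                  exact hB h2
                rw [heq]
                exact hW.1 t (by omega) (by omega) hnct
            · have hncs : ¬ W.Col y := by
                rintro ⟨_, _, h1, _⟩
                exact hA h1
              exact hW.1 y hy0 (by omega) hncs
          · rw [hv_ge y (by omega)]
            exact hW.1 (y + d) (by omega) (by omega)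
              (fun hcol => hncol ((hcolB y hc (by omega)).2 hcol))
        · intro y hcol
          have hy0 : 0 < y := hcol.1
          have hyl : y < W.len - d := by
            have := hcol.2.1
            rwa [hlen'] at this
          rcases Nat.lt_trichotomy y s with hc | hc | hc
          · rw [hv_le y (by omega)]
            exact hW.2 y ((hcolA y hy0 hc).1 hcol)
          · subst hc
            rw [hv_le y (le_refl y)]
            obtain ⟨-, -, hA0, hB0⟩ := hcol
            have hA : (W.v (y - 1), W.v y) ∈ G.E := by
              rwa [hv_le (y - 1) (by omega), hv_le y (le_refl y)] at hA0
            have hB : (W.v (t + 1), W.v t) ∈ G.E := by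
              rw [hv_ge (y + 1) (by omega), hv_le y (le_refl y),
                show y + 1 + d = t + 1 by omega, heq] at hB0
              exact hB0
            have htlen : t < W.len := by omega
            by_cases hCs : W.Col y
            · exact hW.2 y hCs
            · have hFs : (W.v y, W.v (y + 1)) ∈ G.E := by
                rcases W.adj y (by omega) with h | h
                · exact h
                · exact absurd ⟨hy0, by omega, hA, h⟩ hCs
              by_cases hCt : W.Col t
              · obtain ⟨dK, hdK, hdesc⟩ := hW.2 t hCt
                exact ⟨dK, hdK, heq ▸ hdesc⟩
              · have hBt : (W.v t, W.v (t - 1)) ∈ G.E := by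
                  rcases W.adj (t - 1) (by omega) with h | h
                  · rw [show t - 1 + 1 = t by omega] at h
                    exact absurd ⟨by omega, htlen, h, hB⟩ hCt
                  · rw [show t - 1 + 1 = t by omega] at h
                    exact h
                have hQex : ∃ k, ¬ (W.v (y + k), W.v (y + k + 1)) ∈ G.E := by
                  refine ⟨t - 1 - y, ?_⟩
                  rw [show y + (t - 1 - y) = t - 1 by omega, show t - 1 + 1 = t by omega]
                  intro h
                  exact G.no_two_cycle h hBt
                set k0 := Nat.find hQex with hk0
                have hk0spec : ¬ (W.v (y + k0), W.v (y + k0 + 1)) ∈ G.E := Nat.find_spec hQex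
                have hk0min : ∀ z, z < k0 → (W.v (y + z), W.v (y + z + 1)) ∈ G.E := by
                  intro z hz
                  by_contra h
                  exact (Nat.find_min hQex hz) h
                have hk0pos : 0 < k0 := by
                  rcases Nat.eq_zero_or_pos k0 with h | h
                  · exfalso
                    apply hk0spec
                    rw [h, Nat.add_zero]
                    exact hFs
                  · exact h
                have hk0le : k0 ≤ t - 1 - y := by
                  apply Nat.find_min' hQex
                  rw [show y + (t - 1 - y) = t - 1 by omega, show t - 1 + 1 = t by omega]
                  intro h
                  exact G.no_two_cycle h hBt
                have hcolp0 : W.Col (y + k0) := by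
                  refine ⟨by omega, by omega, ?_, ?_⟩
                  · have h1 := hk0min (k0 - 1) (by omega)
                    rw [show y + (k0 - 1) + 1 = y + k0 by omega,
                      show y + (k0 - 1) = y + k0 - 1 by omega] at h1
                    exact h1
                  · rcases W.adj (y + k0) (by omega) with h | h
                    · exact absurd h hk0spec
                    · exact h
                obtain ⟨dK, hdK, hdesc⟩ := hW.2 (y + k0) hcolp0
                have hchain : ∀ z : ℕ, z ≤ k0 →
                    Relation.ReflTransGen (fun a b => (a, b) ∈ G.E) (W.v y) (W.v (y + z)) := by
                  intro z
                  induction z with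
                  | zero =>
                    intro _
                    exact Relation.ReflTransGen.refl
                  | succ z ihz =>
                    intro hz
                    exact (ihz (by omega)).tail (hk0min z (by omega))
                exact ⟨dK, hdK, Relation.ReflTransGen.trans (hchain k0 (le_refl k0)) hdesc⟩
          · rw [hv_ge y (by omega)]
            exact hW.2 (y + d) ((hcolB y hc hyl).1 hcol)
      exact ih W' (by rw [hlen']; omega) hconn'

lemma exists_rel2_target {c w : Fin n}
    (hc : Relation.ReflTransGen (fun a b => (a, b) ∈ G.E) c w)
    (hw : w ∈ insert i (insert j K)) :
    ∃ w', Relation.ReflTransGen (fun x y => (x, y) ∈ G.E ∧ x ∉ K) c w' ∧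
      (w' ∈ K ∨ ((w' = i ∨ w' = j) ∧ w' ∉ K)) := by
  induction hc using Relation.ReflTransGen.head_induction_on with
  | refl =>
    by_cases hwK : w ∈ K
    · exact ⟨w, Relation.ReflTransGen.refl, Or.inl hwK⟩
    · rcases Finset.mem_insert.1 hw with h | h
      · exact ⟨w, Relation.ReflTransGen.refl, Or.inr ⟨Or.inl h, hwK⟩⟩
      · rcases Finset.mem_insert.1 h with h2 | h2
        · exact ⟨w, Relation.ReflTransGen.refl, Or.inr ⟨Or.inr h2, hwK⟩⟩
        · exact absurd h2 hwK
  | @head a c' hac hcb ih =>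
    by_cases haK : a ∈ K
    · exact ⟨a, Relation.ReflTransGen.refl, Or.inl haK⟩
    · obtain ⟨w', hw', hcase⟩ := ih
      exact ⟨w', Relation.ReflTransGen.head ⟨hac, haK⟩ hw', hcase⟩

lemma rel2_chain_notK {z w' : Fin n}
    (h : Relation.ReflTransGen (fun x y => (x, y) ∈ G.E ∧ x ∉ K) z w')
    (hw' : w' ∉ K) : z ∉ K := by
  rcases h.cases_head with h | ⟨z', hz, _⟩
  · rw [h]
    exact hw'
  · exact hz.2

lemma attach_down (hiK : i ∉ K) (hjK : j ∉ K)
    (hreach : ∀ u c : Fin n, (u, c) ∈ G.E → ∃ w ∈ insert i (insert j K),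
      Relation.ReflTransGen (fun a b => (a, b) ∈ G.E) c w)
    {x y : Fin n} (hxy : (x, y) ∈ G.E) (hyK : y ∉ K) (W : Walk G y j) (hW : W.Conn K) :
    (∃ W2 : Walk G x j, W2.Conn K) ∨ (∃ W2 : Walk G i j, W2.Conn K) := by
  by_cases hlen : W.len = 0
  · have hyj : y = j := by
      have h1 := W.end_eq
      rw [hlen, W.start_eq] at h1
      exact h1
    subst hyj
    exact Or.inl ⟨single (Or.inl hxy), conn_single _⟩
  · rcases W.adj 0 (by omega) with hout | hin
    · rw [W.start_eq] at hout
      left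
      refine ⟨(single (Or.inl hxy)).append W, Conn.append (conn_single _) hW ?_⟩
      right; right
      refine ⟨fun h => ?_, fun _ => hyK⟩
      exact absurd h.2 (fun h2 => G.no_two_cycle hout h2)
    · rw [W.start_eq] at hin
      obtain ⟨w, hwmem, hchain⟩ := hreach x y hxy
      obtain ⟨w', hw'chain, hw'case⟩ := exists_rel2_target hchain hwmem
      rcases hw'case with hw'K | ⟨hw'ij, hw'nK⟩
      · left
        refine ⟨(single (Or.inl hxy)).append W, Conn.append (conn_single _) hW ?_⟩
        right; right
        refine ⟨fun _ => ⟨w', hw'K, ?_⟩, fun _ => hyK⟩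
        refine Relation.ReflTransGen.mono ?_ _ _ hw'chain
        exact fun a b hab => hab.1
      · rcases hw'ij with hw'i | hw'j
        · subst hw'i
          right
          obtain ⟨Wr, hbwd, hinfo⟩ := exists_revWalk (fun a b h => h.1) hw'chain
          have hWr : Wr.Conn K :=
            conn_of_backward Wr hbwd
              (fun t _ htl => rel2_chain_notK ((hinfo t (by omega)).2) hiK)
          refine ⟨Wr.append W, Conn.append hWr hW ?_⟩
          by_cases hr0 : Wr.len = 0
          · exact Or.inl hr0
          · right; right
            refine ⟨fun h => ?_, fun _ => hyK⟩
            exfalso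
            have hb := hbwd (Wr.len - 1) (by omega)
            rw [show Wr.len - 1 + 1 = Wr.len by omega, Wr.end_eq] at hb
            exact G.no_two_cycle hb h.1
        · subst hw'j
          left
          obtain ⟨Wd, hfwd, hinfo⟩ := exists_dirWalk (fun a b h => h.1) hw'chain
          have hWd : Wd.Conn K :=
            conn_of_forward Wd hfwd
              (fun t _ htl => rel2_chain_notK ((hinfo t (by omega)).2) hjK)
          refine ⟨(single (Or.inl hxy)).append Wd, Conn.append (conn_single _) hWd ?_⟩
          by_cases hd0 : Wd.len = 0
          · right; exact Or.inl hd0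
          · right; right
            refine ⟨fun h => ?_, fun _ => hyK⟩
            exfalso
            have hf := hfwd 0 (by omega)
            rw [Wd.start_eq] at hf
            exact G.no_two_cycle hf h.2

theorem exists_conn_walk_of_moral_chain (hiK : i ∉ K) (hjK : j ∉ K)
    (hreach : ∀ u c : Fin n, (u, c) ∈ G.E → ∃ w ∈ insert i (insert j K),
      Relation.ReflTransGen (fun a b => (a, b) ∈ G.E) c w)
    (hchain : Relation.ReflTransGen (fun u v => moralAdj G u v ∧ v ∉ K) i j) :
    ∃ W : Walk G i j, W.Conn K := by
  suffices h : ∀ u : Fin n,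
      Relation.ReflTransGen (fun u v => moralAdj G u v ∧ v ∉ K) u j →
      u ∉ K → ((∃ W : Walk G u j, W.Conn K) ∨ (∃ W : Walk G i j, W.Conn K)) by
    rcases h i hchain hiK with h1 | h1 <;> exact h1
  intro u hch
  induction hch using Relation.ReflTransGen.head_induction_on with
  | refl =>
    intro _
    exact Or.inl ⟨nil j, conn_nil j⟩
  | @head u u' hstep hch' ih =>
    intro huK
    have hu'K : u' ∉ K := hstep.2
    rcases ih hu'K with ⟨W, hW⟩ | hdone
    · obtain ⟨hne, hcase⟩ := hstep.1
      rcases hcase with hE | hE | ⟨c, hc1, hc2⟩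
      · exact attach_down hiK hjK hreach hE hu'K W hW
      · left
        refine ⟨(single (Or.inr hE)).append W, Conn.append (conn_single _) hW ?_⟩
        right; right
        refine ⟨fun h => ?_, fun _ => hu'K⟩
        exfalso
        have h1 : (u, u') ∈ G.E := h.1
        exact G.no_two_cycle h1 hE
      · have hW2conn : ((single (Or.inr hc2) : Walk G c u').append W).Conn K := by
          refine Conn.append (conn_single _) hW ?_
          right; right
          refine ⟨fun h => ?_, fun _ => hu'K⟩
          exfalso
          have h1 : (c, u') ∈ G.E := h.1
          exact G.no_two_cycle h1 hc2
        set W2 := (single (Or.inr hc2) : Walk G c u').append W with hW2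
        by_cases hcK : c ∈ K
        · left
          refine ⟨(single (Or.inl hc1)).append W2, Conn.append (conn_single _) hW2conn ?_⟩
          right; right
          refine ⟨fun _ => ⟨c, hcK, Relation.ReflTransGen.refl⟩, fun hn => ?_⟩
          exfalso
          apply hn
          constructor
          · exact hc1
          · have h2 : W2.v 1 = u' := by
              rw [hW2, append_v_le _ W (by rw [single_len])]
              exact single_v1 _
            rw [h2]
            exact hc2
        · exact attach_down hiK hjK hreach hc1 hcK W2 hW2conn
    · exact Or.inr hdone

end Walk

end CI

namespace CI
open Matrix MvPolynomial
variable {n : ℕ}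


lemma Smat_apply (G : DAG n) (x y : Fin n) :
    Smat G x y = ∑ u : Fin n, ((1 - Lmat G)⁻¹) u x *
      (X (Sum.inr u) * ((1 - Lmat G)⁻¹) u y) := by
  unfold Smat
  rw [Matrix.mul_apply]
  refine Finset.sum_congr rfl (fun u _ => ?_)
  rw [Matrix.mul_diagonal, Matrix.transpose_apply, mul_assoc]

lemma pow_zero_of_not_anc {G : DAG n} {A : Set (Fin n)}
    (hclosed : ∀ u v : Fin n, (u, v) ∈ G.E → v ∈ A → u ∈ A)
    {M : Matrix (Fin n) (Fin n) (PolyR n)} (hM : Supp G M) :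
    ∀ (m : ℕ) {c x : Fin n}, x ∈ A → c ∉ A → (M ^ m) c x = 0 := by
  intro m c x hx hc
  by_contra h
  obtain ⟨f, hf0, hfm, hadj⟩ := hM.pow_entry_reach m c x h
  have hAt : ∀ k, k ≤ m → f (m - k) ∈ A := by
    intro k
    induction k with
    | zero =>
      intro _
      rw [Nat.sub_zero, hfm]
      exact hx
    | succ k ihk =>
      intro hk
      have h1 := ihk (by omega)
      have h2 := hadj (m - (k + 1)) (by omega)
      rw [show m - (k + 1) + 1 = m - k by omega] at h2
      exact hclosed _ _ h2 h1
  have h3 := hAt m (le_refl m)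
  rw [Nat.sub_self, hf0] at h3
  exact hc h3

lemma Lmat_entry_agree {G H : DAG n} (hsub : H.E ⊆ G.E) {A : Set (Fin n)}
    (hkeep : ∀ u v : Fin n, (u, v) ∈ G.E → v ∈ A → (u, v) ∈ H.E)
    {u c : Fin n} (hc : c ∈ A) : Lmat G u c = Lmat H u c := by
  unfold Lmat
  by_cases h : (u, c) ∈ G.E
  · simp only [Matrix.of_apply]
    rw [if_pos h, if_pos (hkeep u c h hc)]
  · have h2 : (u, c) ∉ H.E := fun hh => h (hsub hh)
    simp only [Matrix.of_apply]
    rw [if_neg h, if_neg h2]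

lemma pow_entry_agree {G H : DAG n} (hsub : H.E ⊆ G.E) {A : Set (Fin n)}
    (hclosed : ∀ u v : Fin n, (u, v) ∈ G.E → v ∈ A → u ∈ A)
    (hkeep : ∀ u v : Fin n, (u, v) ∈ G.E → v ∈ A → (u, v) ∈ H.E) :
    ∀ (m : ℕ) (u x : Fin n), x ∈ A → (Lmat G ^ m) u x = (Lmat H ^ m) u x := by
  have hclosedH : ∀ u v : Fin n, (u, v) ∈ H.E → v ∈ A → u ∈ A :=
    fun u v h hv => hclosed u v (hsub h) hv
  intro m
  induction m with
  | zero =>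
    intro u x _
    rfl
  | succ m ih =>
    intro u x hx
    rw [pow_succ', pow_succ', Matrix.mul_apply, Matrix.mul_apply]
    refine Finset.sum_congr rfl (fun c _ => ?_)
    by_cases hc : c ∈ A
    · rw [Lmat_entry_agree hsub hkeep hc, ih c x hx]
    · rw [pow_zero_of_not_anc hclosed (supp_Lmat G) m hx hc,
        pow_zero_of_not_anc hclosedH (supp_Lmat H) m hx hc, mul_zero, mul_zero]

lemma inv_entry_agree {G H : DAG n} (hsub : H.E ⊆ G.E) {A : Set (Fin n)}
    (hclosed : ∀ u v : Fin n, (u, v) ∈ G.E → v ∈ A → u ∈ A)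
    (hkeep : ∀ u v : Fin n, (u, v) ∈ G.E → v ∈ A → (u, v) ∈ H.E)
    {u x : Fin n} (hx : x ∈ A) :
    ((1 - Lmat G)⁻¹) u x = ((1 - Lmat H)⁻¹) u x := by
  rw [(supp_Lmat G).inv_one_sub_eq_geom, (supp_Lmat H).inv_one_sub_eq_geom,
    Matrix.sum_apply, Matrix.sum_apply]
  exact Finset.sum_congr rfl (fun m _ => pow_entry_agree hsub hclosed hkeep m u x hx)

lemma Smat_entry_agree {G H : DAG n} (hsub : H.E ⊆ G.E) {A : Set (Fin n)}
    (hclosed : ∀ u v : Fin n, (u, v) ∈ G.E → v ∈ A → u ∈ A)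
    (hkeep : ∀ u v : Fin n, (u, v) ∈ G.E → v ∈ A → (u, v) ∈ H.E)
    {x y : Fin n} (hx : x ∈ A) (hy : y ∈ A) : Smat G x y = Smat H x y := by
  rw [Smat_apply, Smat_apply]
  refine Finset.sum_congr rfl (fun u _ => ?_)
  rw [inv_entry_agree hsub hclosed hkeep hx, inv_entry_agree hsub hclosed hkeep hy]


/-- KEY LEMMA: d-separation implies the CI minor polynomial vanishes. -/
theorem subDet_eq_zero_of_dSep (G : DAG n) (i j : Fin n) (hij : i ≠ j)
    (K : Finset (Fin n)) (hiK : i ∉ K) (hjK : j ∉ K) (hs : G.dSep i j K) :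
    subDet (Smat G) (insert i K) (insert j K) = 0 := by
  classical
  set base : Finset (Fin n) := insert i (insert j K) with hbase
  set A : Set (Fin n) :=
    {v | ∃ w ∈ base, Relation.ReflTransGen (fun a b => (a, b) ∈ G.E) v w} with hA
  set H : DAG n := ⟨G.E.filter (fun e => e.2 ∈ A), fun v hv =>
    G.acyclic v (by
      refine Relation.TransGen.mono ?_ v v hv
      exact fun a b hab => (Finset.mem_filter.1 hab).1)⟩ with hH
  have hsub : H.E ⊆ G.E := fun e he => (Finset.mem_filter.1 he).1
  have hclosed : ∀ u v : Fin n, (u, v) ∈ G.E → v ∈ A → u ∈ A := by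
    rintro u v huv ⟨w, hw, hch⟩
    exact ⟨w, hw, Relation.ReflTransGen.head huv hch⟩
  have hkeep : ∀ u v : Fin n, (u, v) ∈ G.E → v ∈ A → (u, v) ∈ H.E := by
    intro u v huv hv
    exact Finset.mem_filter.2 ⟨huv, hv⟩
  have hsepH : H.dSep i j K := DAG.dSep_mono hsub hs
  have hbasemem : ∀ x ∈ base, x ∈ A := fun x hx => ⟨x, hx, Relation.ReflTransGen.refl⟩
  have hHchain : ∀ c w : Fin n,
      Relation.ReflTransGen (fun a b => (a, b) ∈ G.E) c w → w ∈ base →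
      Relation.ReflTransGen (fun a b => (a, b) ∈ H.E) c w := by
    intro c w hch hw
    induction hch using Relation.ReflTransGen.head_induction_on with
    | refl => exact Relation.ReflTransGen.refl
    | @head a c' hac hcb ih =>
      exact Relation.ReflTransGen.head (hkeep a c' hac ⟨w, hw, hcb⟩) ih
  have hreach : ∀ u c : Fin n, (u, c) ∈ H.E → ∃ w ∈ base,
      Relation.ReflTransGen (fun a b => (a, b) ∈ H.E) c w := by
    intro u c huc
    have hcA : c ∈ A := (Finset.mem_filter.1 huc).2
    obtain ⟨w, hw, hch⟩ := hcA
    exact ⟨w, hw, hHchain c w hch hw⟩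
  have hmoral : ¬ Relation.ReflTransGen (fun u v => moralAdj H u v ∧ v ∉ K) i j := by
    intro hchain
    obtain ⟨W, hW⟩ := Walk.exists_conn_walk_of_moral_chain hiK hjK hreach hchain
    obtain ⟨p, hp⟩ := Walk.exists_gpath_of_conn_walk hij hjK W.len W (le_refl _) hW
    exact hsepH p hp
  have hminor := subDet_zero_of_moral_sep H i j hij K hiK hjK hmoral
  rw [← hminor]
  refine subDet_congr ?_
  intro x hx y hy
  refine Smat_entry_agree hsub hclosed hkeep ?_ ?_
  · refine hbasemem x ?_
    rcases Finset.mem_insert.1 hx with h | h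
    · rw [h]
      exact Finset.mem_insert_self i _
    · exact Finset.mem_insert_of_mem (Finset.mem_insert_of_mem h)
  · refine hbasemem y ?_
    rcases Finset.mem_insert.1 hy with h | h
    · rw [h]
      exact Finset.mem_insert_of_mem (Finset.mem_insert_self j K)
    · exact Finset.mem_insert_of_mem (Finset.mem_insert_of_mem h)

end CI

open CI MvPolynomial in
theorem statement7' {n : ℕ} (G : DAG n) (i j : Fin n) (hij : i ≠ j)
    (K : Finset (Fin n)) (hiK : i ∉ K) (hjK : j ∉ K) (hnd : ¬ G.dSep i j K)
    (a b : Fin n) (hE : (a, b) ∈ G.E)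
    (hall : ∀ p : GPath G i j, p.DConn K → ∃ t : ℕ, t < p.len ∧
        ((p.v t = a ∧ p.v (t + 1) = b) ∨ (p.v t = b ∧ p.v (t + 1) = a))) :
    ((X (Sum.inl (a, b)) : PolyR n) ∣
        subDet (Smat G) (insert i K) (insert j K)) ∧
      gaussianModel (G.deleteEdge a b) ⊆ modelCI G i j K := by
  set G'' := G.deleteEdge a b with hG''
  have hsep : G''.dSep i j K := dSep_deleteEdge_of_all hE hall
  have hzero : subDet (Smat G'') (insert i K) (insert j K) = 0 :=
    subDet_eq_zero_of_dSep G'' i j hij K hiK hjK hsep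
  have hpsi : psiSub (Sum.inl (a, b)) (subDet (Smat G) (insert i K) (insert j K)) = 0 := by
    have h1 := subDet_map (psiSub (Sum.inl (a, b))).toRingHom (Smat G) (insert i K) (insert j K)
    rw [psi_map_Smat] at h1
    rw [← hG''] at h1
    simpa [hzero] using h1
  have hdvd : (X (Sum.inl (a, b)) : PolyR n) ∣
      subDet (Smat G) (insert i K) (insert j K) := X_dvd_of_psi_zero hpsi
  refine ⟨hdvd, ?_⟩
  rintro M ⟨Λ, ω, hparam, rfl⟩
  have hparamG : IsParam G Λ ω := by
    refine ⟨fun a' b' h => hparam.1 a' b' ?_, hparam.2⟩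
    intro hmem
    exact h (Finset.mem_of_mem_erase hmem)
  refine ⟨⟨Λ, ω, hparamG, rfl⟩, ?_⟩
  have heval : subDet (phi Λ ω) (insert i K) (insert j K) =
      evalParam Λ ω (subDet (Smat G) (insert i K) (insert j K)) := by
    rw [subDet_map, evalParam_map_Smat G hparamG]
  obtain ⟨q, hq⟩ := hdvd
  rw [heval, hq, _root_.map_mul]
  have hΛab : Λ a b = 0 := hparam.1 a b (Finset.notMem_erase (a, b) G.E)
  have : evalParam Λ ω (X (Sum.inl (a, b))) = Λ a b := by
    simp [evalParam]
  rw [this, hΛab, zero_mul]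

open CI MvPolynomial in
/-- if every d-connecting path traverses the edge `a → b`, then
`λ_{ab}` divides `det S_{iK,jK}` and `M_{G ∖ a→b} ⊆ M_{G, i⊥⊥j|K}`. -/
theorem statement7 {n : ℕ} (G : DAG n) (i j : Fin n) (hij : i ≠ j)
    (K : Finset (Fin n)) (hiK : i ∉ K) (hjK : j ∉ K) (hnd : ¬ G.dSep i j K)
    (a b : Fin n) (hE : (a, b) ∈ G.E)
    (hall : ∀ p : GPath G i j, p.DConn K → ∃ t : ℕ, t < p.len ∧
        ((p.v t = a ∧ p.v (t + 1) = b) ∨ (p.v t = b ∧ p.v (t + 1) = a))) :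
    ((X (Sum.inl (a, b)) : PolyR n) ∣
        subDet (Smat G) (insert i K) (insert j K)) ∧
      gaussianModel (G.deleteEdge a b) ⊆ modelCI G i j K := by
  exact statement7' G i j hij K hiK hjK hnd a b hE hall
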